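/- Let f : ℝⁿ → ℝ be convex and differentiable with L-Lipschitz gradient, and let w' = w - η∇f(w) with 0 < η ≤ 1/L. Then the gradient norm does not increase: ‖∇f(w')‖ ≤ ‖∇f(w)‖. Consequently, for the gradient descent sequence w_{t+1} = wₜ - η∇f(wₜ), the step lengths ‖w_{t+1} - wₜ‖ = η‖∇f(wₜ)‖ are non-increasing in t. -/

import Mathlib

/-!
For convex `f` with `K`-Lipschitz gradient, the first-order convexity bound and the descent lemma
combine into cocoercivity: `K⁻¹ ‖∇f y - ∇f x‖² ≤ ⟪∇f y - ∇f x, y - x⟫`. Taking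
`y = w - η ∇f w` and `d = ∇f y - ∇f w`, this gives `⟪∇f w, d⟫ ≤ -‖d‖²` as soon as `η ≤ 1 / K`,
hence `‖∇f y‖² = ‖∇f w‖² + 2 ⟪∇f w, d⟫ + ‖d‖² ≤ ‖∇f w‖²`. Along gradient descent the step
lengths are `η ‖∇f (w t)‖`, so they do not increase.
-/

open InnerProductSpace Set
open scoped RealInnerProductSpace NNReal

lemma norm_add_le_of_inner_le_neg_norm_sq {F : Type*} [NormedAddCommGroup F]
    [InnerProductSpace ℝ F] {g d : F} (h : ⟪g, d⟫ ≤ -‖d‖ ^ 2) : ‖g + d‖ ≤ ‖g‖ := by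
  have hsq : ‖g + d‖ ^ 2 ≤ ‖g‖ ^ 2 := by
    rw [norm_add_sq_real]
    nlinarith [sq_nonneg ‖d‖]
  exact pow_le_pow_iff_left₀ (norm_nonneg _) (norm_nonneg _) two_ne_zero |>.mp hsq

section GradientInequalities

variable {E : Type*} [NormedAddCommGroup E] [InnerProductSpace ℝ E] [CompleteSpace E]
  {f : E → ℝ}

lemma hasDerivAt_comp_add_smul {x v : E} {t : ℝ} (hf : DifferentiableAt ℝ f (x + t • v)) :
    HasDerivAt (fun s : ℝ => f (x + s • v)) ⟪gradient f (x + t • v), v⟫ t := by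
  have hline : HasDerivAt (fun s : ℝ => x + s • v) v t := by
    simpa using ((hasDerivAt_id t).smul_const v).const_add x
  simpa [Function.comp_def] using hf.hasGradientAt.hasFDerivAt.comp_hasDerivAt t hline

lemma ConvexOn.add_inner_gradient_le (hconv : ConvexOn ℝ univ f) {x : E}
    (hf : DifferentiableAt ℝ f x) (y : E) :
    f x + ⟪gradient f x, y - x⟫ ≤ f y := by
  have hline : ConvexOn ℝ univ (fun s : ℝ => f (x + s • (y - x))) := by
    simpa [Function.comp_def, AffineMap.lineMap_apply, add_comm] using
      hconv.comp_affineMap (AffineMap.lineMap x y : ℝ →ᵃ[ℝ] E)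
  have hderiv := hasDerivAt_comp_add_smul (v := y - x) (t := 0) (by simpa using hf)
  have := hline.le_slope_of_hasDerivAt (mem_univ 0) (mem_univ 1) zero_lt_one hderiv
  simp only [slope_def_field, zero_smul, add_zero, one_smul, add_sub_cancel, sub_zero,
    div_one] at this
  linarith

lemma le_add_inner_gradient_add_of_lipschitzWith {K : ℝ≥0} (hf : Differentiable ℝ f)
    (hlip : LipschitzWith K (gradient f)) (x y : E) :
    f y ≤ f x + ⟪gradient f x, y - x⟫ + K / 2 * ‖y - x‖ ^ 2 := by
  set v := y - x
  set φ := fun s : ℝ => f (x + s • v) - s * ⟪gradient f x, v⟫ - K / 2 * s ^ 2 * ‖v‖ ^ 2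
  have hderiv : ∀ t : ℝ, HasDerivAt φ
      (⟪gradient f (x + t • v) - gradient f x, v⟫ - K * t * ‖v‖ ^ 2) t := by
    intro t
    have := ((hasDerivAt_comp_add_smul (x := x) (v := v) (hf _)).sub
      ((hasDerivAt_id t).mul_const ⟪gradient f x, v⟫)).sub
      (((hasDerivAt_pow 2 t).const_mul (K / 2 : ℝ)).mul_const (‖v‖ ^ 2))
    refine this.congr_deriv ?_
    rw [inner_sub_left]
    ring
  have hderiv_nonpos : ∀ t ∈ interior (Ici (0 : ℝ)),
      ⟪gradient f (x + t • v) - gradient f x, v⟫ - K * t * ‖v‖ ^ 2 ≤ 0 := by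
    intro t ht
    rw [interior_Ici] at ht
    have hlip_t : ‖gradient f (x + t • v) - gradient f x‖ ≤ K * (t * ‖v‖) := by
      simpa [dist_eq_norm, norm_smul, abs_of_pos (mem_Ioi.mp ht)] using
        hlip.dist_le_mul (x + t • v) x
    rw [sub_nonpos]
    calc ⟪gradient f (x + t • v) - gradient f x, v⟫
        ≤ ‖gradient f (x + t • v) - gradient f x‖ * ‖v‖ := real_inner_le_norm _ _
      _ ≤ K * (t * ‖v‖) * ‖v‖ := by gcongr
      _ = K * t * ‖v‖ ^ 2 := by ring
  have hanti : AntitoneOn φ (Ici 0) :=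
    antitoneOn_of_hasDerivWithinAt_nonpos (convex_Ici 0)
      (fun t _ => (hderiv t).continuousAt.continuousWithinAt)
      (fun t _ => (hderiv t).hasDerivWithinAt) hderiv_nonpos
  have := hanti self_mem_Ici (zero_le_one' ℝ) zero_le_one
  simp only [φ, v, zero_smul, one_smul, add_zero, add_sub_cancel, zero_mul, one_mul, mul_one,
    one_pow, ne_eq, OfNat.ofNat_ne_zero, not_false_eq_true, zero_pow, mul_zero, sub_zero] at this
  linarith

lemma ConvexOn.add_inner_gradient_add_norm_sq_le (hconv : ConvexOn ℝ univ f)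
    (hf : Differentiable ℝ f) {K : ℝ≥0} (hK : 0 < K) (hlip : LipschitzWith K (gradient f))
    (x y : E) :
    f x + ⟪gradient f x, y - x⟫ + (2 * (K : ℝ))⁻¹ * ‖gradient f y - gradient f x‖ ^ 2 ≤ f y := by
  set u := gradient f y - gradient f x
  -- `z` minimizes the quadratic upper bound at `y` of `f - ⟪∇f x, ·⟫`, which is minimal at `x`
  set z := y - (K : ℝ)⁻¹ • u
  have hx : f x + ⟪gradient f x, y - x⟫ - (K : ℝ)⁻¹ * ⟪gradient f x, u⟫ ≤ f z :=
    calc f x + ⟪gradient f x, y - x⟫ - (K : ℝ)⁻¹ * ⟪gradient f x, u⟫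
        = f x + ⟪gradient f x, z - x⟫ := by
          simp only [show z - x = (y - x) - (K : ℝ)⁻¹ • u by simp only [z]; abel,
            inner_sub_right, real_inner_smul_right]
          ring
      _ ≤ f z := hconv.add_inner_gradient_le (hf x) z
  have hz : f z ≤ f y - (K : ℝ)⁻¹ * ⟪gradient f y, u⟫ + (2 * (K : ℝ))⁻¹ * ‖u‖ ^ 2 :=
    calc f z ≤ f y + ⟪gradient f y, z - y⟫ + K / 2 * ‖z - y‖ ^ 2 :=
          le_add_inner_gradient_add_of_lipschitzWith hf hlip y z
      _ = f y - (K : ℝ)⁻¹ * ⟪gradient f y, u⟫ + (2 * (K : ℝ))⁻¹ * ‖u‖ ^ 2 := by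
          rw [show z - y = -((K : ℝ)⁻¹ • u) by simp only [z]; abel, inner_neg_right,
            real_inner_smul_right, norm_neg, norm_smul, Real.norm_of_nonneg (by positivity)]
          field_simp
          ring
  have hu : ⟪gradient f y, u⟫ - ⟪gradient f x, u⟫ = ‖u‖ ^ 2 := by
    rw [← inner_sub_left, real_inner_self_eq_norm_sq]
  have hinv : (K : ℝ)⁻¹ = 2 * (2 * (K : ℝ))⁻¹ := by field_simp
  linear_combination hx + hz - (K : ℝ)⁻¹ * hu - ‖u‖ ^ 2 * hinv

lemma ConvexOn.inv_mul_norm_sq_le_inner_gradient_sub (hconv : ConvexOn ℝ univ f)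
    (hf : Differentiable ℝ f) {K : ℝ≥0} (hK : 0 < K) (hlip : LipschitzWith K (gradient f))
    (x y : E) :
    (K : ℝ)⁻¹ * ‖gradient f y - gradient f x‖ ^ 2 ≤ ⟪gradient f y - gradient f x, y - x⟫ := by
  have hxy := hconv.add_inner_gradient_add_norm_sq_le hf hK hlip x y
  have hyx := hconv.add_inner_gradient_add_norm_sq_le hf hK hlip y x
  rw [norm_sub_rev, ← neg_sub y x, inner_neg_right] at hyx
  have hinv : (K : ℝ)⁻¹ = 2 * (2 * (K : ℝ))⁻¹ := by field_simp
  rw [inner_sub_left, hinv]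
  linarith

lemma ConvexOn.norm_gradient_sub_smul_le (hconv : ConvexOn ℝ univ f)
    (hf : Differentiable ℝ f) {K : ℝ≥0} (hK : 0 < K) (hlip : LipschitzWith K (gradient f))
    {η : ℝ} (hη : 0 < η) (hηK : η ≤ 1 / K) (w : E) :
    ‖gradient f (w - η • gradient f w)‖ ≤ ‖gradient f w‖ := by
  set g := gradient f w
  set d := gradient f (w - η • g) - g
  have hcoco := hconv.inv_mul_norm_sq_le_inner_gradient_sub hf hK hlip w (w - η • g)
  rw [sub_sub_cancel_left, inner_neg_right, real_inner_smul_right, real_inner_comm] at hcoco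
  have hdescent : ⟪g, d⟫ ≤ -‖d‖ ^ 2 := by
    have hη_sq : η * ‖d‖ ^ 2 ≤ (K : ℝ)⁻¹ * ‖d‖ ^ 2 := by
      rw [one_div] at hηK
      gcongr
    have : η * ‖d‖ ^ 2 ≤ η * -⟪g, d⟫ := by linarith
    linarith [le_of_mul_le_mul_left this hη]
  simpa only [d, add_sub_cancel] using norm_add_le_of_inner_le_neg_norm_sq hdescent

end GradientInequalities

lemma antitone_norm_sub_of_norm_step_le {E : Type*} [SeminormedAddCommGroup E]
    [NormedSpace ℝ E] {g : E → E} {η : ℝ} (hη : 0 ≤ η)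
    (hstep : ∀ w, ‖g (w - η • g w)‖ ≤ ‖g w‖) {w : ℕ → E}
    (hw : ∀ t, w (t + 1) = w t - η • g (w t)) :
    Antitone fun t => ‖w (t + 1) - w t‖ := by
  have hlen : ∀ t, ‖w (t + 1) - w t‖ = η * ‖g (w t)‖ := fun t => by
    rw [hw, sub_sub_cancel_left, norm_neg, norm_smul, Real.norm_of_nonneg hη]
  refine antitone_nat_of_succ_le fun t => ?_
  simp only [hlen]
  gcongr
  rw [hw]
  exact hstep (w t)

theorem convex_grad_norm_nonincreasing {n : ℕ}
    (f : EuclideanSpace ℝ (Fin n) → ℝ)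
    (hconv : ConvexOn ℝ Set.univ f) (hf : Differentiable ℝ f)
    (L : ℝ) (hL : 0 < L)
    (hlip : LipschitzWith (Real.toNNReal L) (gradient f))
    (η : ℝ) (hη : 0 < η) (hηL : η ≤ 1 / L) :
    (∀ w : EuclideanSpace ℝ (Fin n),
      ‖gradient f (w - η • gradient f w)‖ ≤ ‖gradient f w‖) ∧
    ∀ w : ℕ → EuclideanSpace ℝ (Fin n),
      (∀ t, w (t + 1) = w t - η • gradient f (w t)) →
      Antitone (fun t => ‖w (t + 1) - w t‖) := by
  have hstep : ∀ w : EuclideanSpace ℝ (Fin n),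
      ‖gradient f (w - η • gradient f w)‖ ≤ ‖gradient f w‖ :=
    hconv.norm_gradient_sub_smul_le hf (Real.toNNReal_pos.mpr hL) hlip hη
      (by rwa [Real.coe_toNNReal L hL.le])
  exact ⟨hstep, fun w hw => antitone_norm_sub_of_norm_step_le hη.le hstep hw⟩
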